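/- arXiv:0809.4275 — 4 statements merged into one kernel-verified Lean document; each statement's English description precedes it below -/
import Mathlib

section
/- Let x : [0,S]×[0,∞) → ℝ have continuous partial derivative x' in the second variable, let y, u, v : [0,S]×[0,T] → ℝ be continuous with y nonnegative, let c_n → ∞, and suppose c_n(x_n - x) → u and c_n(y_n - y) → v uniformly on compact rectangles, where each y_n is nonnegative. Then c_n(x_n ∘₂ y_n - x ∘₂ y) → u ∘₂ y + (x' ∘₂ y)·v uniformly on [0,S]×[0,T]. -/
open Filter Set

/-- Convergence preservation of the two-parameter composition map with nonlinear
centering: if `c_n(x_n - x) → u` and `c_n(y_n - y) → v` uniformly on compact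
rectangles, then `c_n(x_n ∘₂ y_n - x ∘₂ y) → u ∘₂ y + (x' ∘₂ y)·v`. -/
theorem stmt_4 (S T : ℝ)
    (x : ℝ × ℝ → ℝ) (x' : ℝ × ℝ → ℝ)
    (hderiv : ∀ s t : ℝ, HasDerivAt (fun r => x (s, r)) (x' (s, t)) t)
    (hx'cont : Continuous x')
    (y u v : ℝ × ℝ → ℝ)
    (hy : ContinuousOn y (Icc (0:ℝ) S ×ˢ Icc (0:ℝ) T))
    (hu : ContinuousOn u (Icc (0:ℝ) S ×ˢ Ici (0:ℝ)))
    (hv : ContinuousOn v (Icc (0:ℝ) S ×ˢ Icc (0:ℝ) T))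
    (hypos : ∀ p ∈ Icc (0:ℝ) S ×ˢ Icc (0:ℝ) T, 0 ≤ y p)
    (c : ℕ → ℝ) (hc : Tendsto c atTop atTop)
    (xn yn : ℕ → ℝ × ℝ → ℝ)
    (hynpos : ∀ n, ∀ p ∈ Icc (0:ℝ) S ×ˢ Icc (0:ℝ) T, 0 ≤ yn n p)
    (hxconv : ∀ T' > 0,
      TendstoUniformlyOn (fun n p => c n * (xn n p - x p)) u atTop
        (Icc (0:ℝ) S ×ˢ Icc (0:ℝ) T'))
    (hyconv : TendstoUniformlyOn (fun n p => c n * (yn n p - y p)) v atTop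
      (Icc (0:ℝ) S ×ˢ Icc (0:ℝ) T)) :
    TendstoUniformlyOn
      (fun n p => c n * (xn n (p.1, yn n p) - x (p.1, y p)))
      (fun p => u (p.1, y p) + x' (p.1, y p) * v p)
      atTop (Icc (0:ℝ) S ×ˢ Icc (0:ℝ) T) := by
  set K : Set (ℝ × ℝ) := Icc (0:ℝ) S ×ˢ Icc (0:ℝ) T with hKdef
  have hKcomp : IsCompact K := isCompact_Icc.prod isCompact_Icc
  -- bound on y
  obtain ⟨M0, hM0⟩ := hKcomp.exists_bound_of_continuousOn hy
  set M : ℝ := max M0 0 with hMdef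
  have hM0le : (0:ℝ) ≤ M := le_max_right _ _
  have hyM : ∀ p ∈ K, y p ≤ M := fun p hp =>
    ((le_abs_self _).trans (hM0 p hp)).trans (le_max_left _ _)
  set T' : ℝ := M + 1 with hT'def
  have hT' : 0 < T' := by linarith
  set K' : Set (ℝ × ℝ) := Icc (0:ℝ) S ×ˢ Icc (0:ℝ) T' with hK'def
  have hK'comp : IsCompact K' := isCompact_Icc.prod isCompact_Icc
  -- bound on v
  obtain ⟨Cv0, hCv0⟩ := hKcomp.exists_bound_of_continuousOn hv
  set Cv : ℝ := max Cv0 0 with hCvdef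
  have hCvnn : (0:ℝ) ≤ Cv := le_max_right _ _
  have hCv : ∀ p ∈ K, |v p| ≤ Cv := fun p hp => (hCv0 p hp).trans (le_max_left _ _)
  -- u continuous on K'
  have hK'sub : K' ⊆ Icc (0:ℝ) S ×ˢ Ici (0:ℝ) :=
    Set.prod_mono_right Icc_subset_Ici_self
  have huK' : ContinuousOn u K' := hu.mono hK'sub
  -- bound on x' on K'
  obtain ⟨Cx0, hCx0⟩ := hK'comp.exists_bound_of_continuousOn hx'cont.continuousOn
  set Cx : ℝ := max Cx0 0 with hCxdef
  have hCxnn : (0:ℝ) ≤ Cx := le_max_right _ _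
  have hCx : ∀ q ∈ K', |x' q| ≤ Cx := fun q hq => (hCx0 q hq).trans (le_max_left _ _)
  -- uniform continuity
  have huuc : UniformContinuousOn u K' :=
    hK'comp.uniformContinuousOn_of_continuous huK'
  have hxuc : UniformContinuousOn x' K' :=
    hK'comp.uniformContinuousOn_of_continuous hx'cont.continuousOn
  -- yn → y uniformly on K
  have hyn_unif : ∀ η : ℝ, 0 < η → ∀ᶠ n in atTop, ∀ p ∈ K, |yn n p - y p| < η := by
    intro η hη
    have h1 := (Metric.tendstoUniformlyOn_iff.mp hyconv) 1 one_pos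
    have h2 := hc.eventually_ge_atTop ((Cv + 1) / η + 1)
    filter_upwards [h1, h2] with n hn1 hn2 p hp
    have hdivnn : (0:ℝ) ≤ (Cv + 1) / η := by positivity
    have hcpos : 0 < c n := by linarith
    have hv1 : |c n * (yn n p - y p)| ≤ Cv + 1 := by
      have h3 := hn1 p hp
      rw [Real.dist_eq] at h3
      have h4 := abs_sub_abs_le_abs_sub (c n * (yn n p - y p)) (v p)
      have h5 : |c n * (yn n p - y p) - v p| = |v p - c n * (yn n p - y p)| :=
        abs_sub_comm _ _
      have hvb := hCv p hp
      linarith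
    rw [abs_mul, abs_of_pos hcpos] at hv1
    have hgt : (Cv + 1) / η < c n := by linarith
    have hlt : Cv + 1 < c n * η := (div_lt_iff₀ hη).mp hgt
    by_contra hcon
    push_neg at hcon
    have : c n * η ≤ c n * |yn n p - y p| := by
      apply mul_le_mul_of_nonneg_left hcon hcpos.le
    linarith
  -- main epsilon argument
  rw [Metric.tendstoUniformlyOn_iff]
  intro ε hε
  set D : ℝ := 4 + Cv + Cx with hDdef
  have hDpos : (0:ℝ) < D := by linarith
  set ε' : ℝ := min 1 (ε / D) with hε'def
  have hε'pos : 0 < ε' := lt_min one_pos (by positivity)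
  have hε'le1 : ε' ≤ 1 := min_le_left _ _
  have hε'D : ε' * D ≤ ε := by
    calc ε' * D ≤ (ε / D) * D := by
          apply mul_le_mul_of_nonneg_right (min_le_right _ _) hDpos.le
      _ = ε := div_mul_cancel₀ ε hDpos.ne'
  -- uniform continuity moduli
  obtain ⟨δu, hδu, hδuspec⟩ := Metric.uniformContinuousOn_iff.mp huuc ε' hε'pos
  obtain ⟨δx, hδx, hδxspec⟩ := Metric.uniformContinuousOn_iff.mp hxuc ε' hε'pos
  set δ : ℝ := min δu δx with hδdef
  have hδpos : 0 < δ := lt_min hδu hδx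
  set η : ℝ := min δ 1 with hηdef
  have hηpos : 0 < η := lt_min hδpos one_pos
  -- eventual facts
  have h0 := hc.eventually_ge_atTop 1
  have h1 := (Metric.tendstoUniformlyOn_iff.mp hyconv) ε' hε'pos
  have h2 := hyn_unif η hηpos
  have h3 := (Metric.tendstoUniformlyOn_iff.mp (hxconv T' hT')) ε' hε'pos
  filter_upwards [h0, h1, h2, h3] with n hn0 hn1 hn2 hn3
  intro p hp
  have hcpos : (0:ℝ) < c n := by linarith
  have hp1 := hp.1
  have hp2 := hp.2
  set s : ℝ := p.1 with hsdef
  set a : ℝ := y p with hadef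
  set b : ℝ := yn n p with hbdef
  have ha0 : 0 ≤ a := hypos p hp
  have haM : a ≤ M := hyM p hp
  have hb0 : 0 ≤ b := hynpos n p hp
  have hab : |b - a| < η := hn2 p hp
  have hab1 : |b - a| < 1 := hab.trans_le (min_le_right _ _)
  have habδ : |b - a| < δ := hab.trans_le (min_le_left _ _)
  have hbT' : b ≤ T' := by
    have := abs_le.mp hab1.le
    simp only [hT'def]; linarith
  have memA : (s, a) ∈ K' := ⟨hp1, ⟨ha0, by simp only [hT'def]; linarith⟩⟩
  have memB : (s, b) ∈ K' := ⟨hp1, ⟨hb0, hbT'⟩⟩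
  have hdistBA : dist ((s, b) : ℝ × ℝ) (s, a) < δ := by
    rw [Prod.dist_eq]
    apply max_lt
    · simpa using hδpos
    · rw [Real.dist_eq]; exact habδ
  -- T1 : hxconv part
  have T1 : |c n * (xn n (s, b) - x (s, b)) - u (s, b)| < ε' := by
    have := hn3 (s, b) memB
    rw [Real.dist_eq, abs_sub_comm] at this
    exact this
  -- T2 : u uniform continuity
  have T2 : |u (s, b) - u (s, a)| < ε' := by
    have := hδuspec (s, b) memB (s, a) memA (hdistBA.trans_le (min_le_left _ _))
    rwa [Real.dist_eq] at this
  -- c n * (b - a) close to v p and bounded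
  have hcv : |v p - c n * (b - a)| < ε' := by
    have := hn1 p hp
    rwa [Real.dist_eq] at this
  have hcb_bound : |c n * (b - a)| ≤ Cv + ε' := by
    have h4 := abs_sub_abs_le_abs_sub (c n * (b - a)) (v p)
    have h5 : |c n * (b - a) - v p| = |v p - c n * (b - a)| := abs_sub_comm _ _
    have hvb := hCv p hp
    linarith
  -- T3 : MVT part
  have hmvt : |x (s, b) - x (s, a) - x' (s, a) * (b - a)| ≤ ε' * |b - a| := by
    have hconv : Convex ℝ (uIcc a b) := convex_uIcc a b
    have hderivg : ∀ r ∈ uIcc a b,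
        HasDerivWithinAt (fun r => x (s, r) - x' (s, a) * r)
          (x' (s, r) - x' (s, a)) (uIcc a b) r := by
      intro r _
      exact (((hderiv s r).sub ((hasDerivAt_id r).const_mul (x' (s, a)))).congr_deriv
        (by ring)).hasDerivWithinAt
    have hbound : ∀ r ∈ uIcc a b, ‖x' (s, r) - x' (s, a)‖ ≤ ε' := by
      intro r hr
      rw [Set.uIcc, Set.mem_Icc] at hr
      have hra : |r - a| ≤ |b - a| := by
        rcases le_total a b with h | h
        · rw [min_eq_left h, max_eq_right h] at hr
          rw [abs_of_nonneg (by linarith), abs_of_nonneg (by linarith)]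
          linarith
        · rw [min_eq_right h, max_eq_left h] at hr
          rw [abs_of_nonpos (by linarith), abs_of_nonpos (by linarith)]
          linarith
      have hr0 : 0 ≤ r := by
        rcases le_total a b with h | h
        · rw [min_eq_left h] at hr; linarith [hr.1]
        · rw [min_eq_right h] at hr; linarith [hr.1]
      have hrT' : r ≤ T' := by
        rcases le_total a b with h | h
        · rw [max_eq_right h] at hr; linarith [hr.2]
        · rw [max_eq_left h] at hr
          have : a ≤ M := haM
          simp only [hT'def]; linarith [hr.2]
      have memR : ((s, r) : ℝ × ℝ) ∈ K' := ⟨hp1, ⟨hr0, hrT'⟩⟩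
      have hd : dist ((s, r) : ℝ × ℝ) (s, a) < δx := by
        rw [Prod.dist_eq]
        apply max_lt
        · simpa using hδx
        · rw [Real.dist_eq]
          calc |r - a| ≤ |b - a| := hra
            _ < δ := habδ
            _ ≤ δx := min_le_right _ _
      have := hδxspec (s, r) memR (s, a) memA hd
      rw [Real.dist_eq] at this
      exact this.le
    have key := Convex.norm_image_sub_le_of_norm_hasDerivWithin_le hderivg hbound hconv
      (left_mem_uIcc) (right_mem_uIcc)
    simp only [Real.norm_eq_abs] at key
    calc |x (s, b) - x (s, a) - x' (s, a) * (b - a)|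
        = |(x (s, b) - x' (s, a) * b) - (x (s, a) - x' (s, a) * a)| := by congr 1; ring
      _ ≤ ε' * |b - a| := key
  have T3 : |c n * (x (s, b) - x (s, a)) - x' (s, a) * (c n * (b - a))| ≤ ε' * (Cv + ε') := by
    have h6 : c n * (x (s, b) - x (s, a) - x' (s, a) * (b - a))
        = c n * (x (s, b) - x (s, a)) - x' (s, a) * (c n * (b - a)) := by ring
    have h7 : |c n * (x (s, b) - x (s, a)) - x' (s, a) * (c n * (b - a))|
        = c n * |x (s, b) - x (s, a) - x' (s, a) * (b - a)| := by
      rw [← h6, abs_mul, abs_of_pos hcpos]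
    rw [h7]
    calc c n * |x (s, b) - x (s, a) - x' (s, a) * (b - a)|
        ≤ c n * (ε' * |b - a|) := mul_le_mul_of_nonneg_left hmvt hcpos.le
      _ = ε' * |c n * (b - a)| := by
          rw [abs_mul, abs_of_pos hcpos]; ring
      _ ≤ ε' * (Cv + ε') := mul_le_mul_of_nonneg_left hcb_bound hε'pos.le
  -- T4
  have T4 : |x' (s, a) * (c n * (b - a)) - x' (s, a) * v p| ≤ Cx * ε' := by
    calc |x' (s, a) * (c n * (b - a)) - x' (s, a) * v p|
        = |x' (s, a)| * |c n * (b - a) - v p| := by rw [← abs_mul]; congr 1; ring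
      _ ≤ Cx * ε' := by
          apply mul_le_mul (hCx _ memA) _ (abs_nonneg _) hCxnn
          rw [abs_sub_comm]; exact hcv.le
  -- combine
  rw [Real.dist_eq]
  have hdecomp : u (s, a) + x' (s, a) * v p - c n * (xn n (s, b) - x (s, a))
      = -((c n * (xn n (s, b) - x (s, b)) - u (s, b))
        + (u (s, b) - u (s, a))
        + (c n * (x (s, b) - x (s, a)) - x' (s, a) * (c n * (b - a)))
        + (x' (s, a) * (c n * (b - a)) - x' (s, a) * v p)) := by ring
  have habs : |u (s, a) + x' (s, a) * v p - c n * (xn n (s, b) - x (s, a))|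
      ≤ |c n * (xn n (s, b) - x (s, b)) - u (s, b)|
        + |u (s, b) - u (s, a)|
        + |c n * (x (s, b) - x (s, a)) - x' (s, a) * (c n * (b - a))|
        + |x' (s, a) * (c n * (b - a)) - x' (s, a) * v p| := by
    rw [hdecomp, abs_neg]
    calc |c n * (xn n (s, b) - x (s, b)) - u (s, b)
          + (u (s, b) - u (s, a))
          + (c n * (x (s, b) - x (s, a)) - x' (s, a) * (c n * (b - a)))
          + (x' (s, a) * (c n * (b - a)) - x' (s, a) * v p)|
        ≤ |c n * (xn n (s, b) - x (s, b)) - u (s, b)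
          + (u (s, b) - u (s, a))
          + (c n * (x (s, b) - x (s, a)) - x' (s, a) * (c n * (b - a)))|
          + |x' (s, a) * (c n * (b - a)) - x' (s, a) * v p| := abs_add_le _ _
      _ ≤ |c n * (xn n (s, b) - x (s, b)) - u (s, b)
          + (u (s, b) - u (s, a))|
          + |c n * (x (s, b) - x (s, a)) - x' (s, a) * (c n * (b - a))|
          + |x' (s, a) * (c n * (b - a)) - x' (s, a) * v p| := by
            have := abs_add_le (c n * (xn n (s, b) - x (s, b)) - u (s, b)
              + (u (s, b) - u (s, a)))
              (c n * (x (s, b) - x (s, a)) - x' (s, a) * (c n * (b - a)))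
            linarith
      _ ≤ |c n * (xn n (s, b) - x (s, b)) - u (s, b)|
          + |u (s, b) - u (s, a)|
          + |c n * (x (s, b) - x (s, a)) - x' (s, a) * (c n * (b - a))|
          + |x' (s, a) * (c n * (b - a)) - x' (s, a) * v p| := by
            have := abs_add_le (c n * (xn n (s, b) - x (s, b)) - u (s, b))
              (u (s, b) - u (s, a))
            linarith
  have hsum : |u (s, a) + x' (s, a) * v p - c n * (xn n (s, b) - x (s, a))|
      < ε' * D := by
    have hee : ε' * ε' ≤ ε' := mul_le_of_le_one_left hε'pos.le hε'le1
    have hexp1 : ε' * D = 4 * ε' + ε' * Cv + ε' * Cx := by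
      simp only [hDdef]; ring
    have hexp2 : ε' * (Cv + ε') = ε' * Cv + ε' * ε' := by ring
    have hexp3 : Cx * ε' = ε' * Cx := by ring
    have : ε' + ε' + ε' * (Cv + ε') + Cx * ε' < ε' * D := by
      rw [hexp1, hexp2, hexp3]; linarith
    linarith
  calc |u (s, a) + x' (s, a) * v p - c n * (xn n (s, b) - x (s, a))|
      < ε' * D := hsum
    _ ≤ ε := hε'D
end

section
/- Fix μ, θ, λ, w > 0 and a ∈ ℝ, and define h_a : ℝ × [0,∞)² → ℝ by h_a(x,s,t) = -1_{t ≥ s+w} μ x - 1_{t < s+w} θ (x - a). Then for each T > 0 there exist constants c₁, c₂, c₃ > 0 such that for all s₁, s₂ ≥ 0, bounded measurable x₁, x₂ : [0,∞)² → ℝ, and every increasing homeomorphism λ̃ of [0,T] with strictly positive continuous derivative, ∫₀ᵗ |h_a(x₁(s₁,u),s₁,u) - h_a(x₂(s₂,λ̃(u)),s₂,λ̃(u))| du ≤ c₁|s₁-s₂| + c₂‖λ̃ - e‖_T + c₃∫₀ᵗ |x₁(s₁,u) - x₂(s₂,λ̃(u))| du for all t ∈ [0,T], where the constants may depend on T and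 on sup norms of x₂(s₂,·) over [0,T]. -/
open Set MeasureTheory

lemma stmt10_bdd_ii {f : ℝ → ℝ} (hf : Measurable f) (C : ℝ) (hb : ∀ u, |f u| ≤ C) (t : ℝ) :
    IntervalIntegrable f volume 0 t := by
  rw [intervalIntegrable_iff]
  refine Integrable.mono' (g := fun _ => C) ?_ hf.aestronglyMeasurable (ae_of_all _ fun u => ?_)
  · exact integrableOn_const measure_Ioc_lt_top.ne
  · simpa [Real.norm_eq_abs] using hb u

lemma stmt10_ind_int_le {p q t D : ℝ} (hD : 0 ≤ D) (hqp : q - p ≤ D) (C : ℝ) (hC : 0 ≤ C)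
    (ht : 0 ≤ t) :
    ∫ u in (0:ℝ)..t, (Ico p q).indicator (fun _ => C) u ≤ C * D := by
  rw [intervalIntegral.integral_of_le ht, setIntegral_indicator measurableSet_Ico,
    setIntegral_const]
  have h1 : volume (Ioc 0 t ∩ Ico p q) ≤ ENNReal.ofReal D := by
    refine le_trans (measure_mono inter_subset_right) ?_
    rw [Real.volume_Ico]
    exact ENNReal.ofReal_le_ofReal hqp
  have h2 : (volume (Ioc 0 t ∩ Ico p q)).toReal ≤ D := ENNReal.toReal_le_of_le_ofReal hD h1
  have h3 : 0 ≤ (volume (Ioc 0 t ∩ Ico p q)).toReal := ENNReal.toReal_nonneg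
  rw [smul_eq_mul]
  rw [measureReal_def]
  nlinarith

lemma stmt10_piece_bdd (μ θ a w M s v b : ℝ) (hμ : 0 < μ) (hθ : 0 < θ) (hb : |b| ≤ M) :
    |(-(if s + w ≤ v then μ * b else 0) - (if v < s + w then θ * (b - a) else 0))| ≤
      μ * M + θ * (M + |a|) := by
  have hM : 0 ≤ M := (abs_nonneg b).trans hb
  have hba : |b - a| ≤ M + |a| := (abs_sub b a).trans (by linarith)
  split_ifs with h1 h2
  · exact absurd h2 (not_lt.2 h1)
  · rw [sub_zero, abs_neg, abs_mul, abs_of_pos hμ]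
    nlinarith [abs_nonneg a, abs_le.mp hb]
  · rw [neg_zero, zero_sub, abs_neg, abs_mul, abs_of_pos hθ]
    nlinarith
  · simp; positivity

set_option maxHeartbeats 1000000 in
/-- The function `h_a(x,s,t) = -1_{t ≥ s+w} μ x - 1_{t < s+w} θ (x - a)` satisfies the
Lipschitz-type condition required for the two-parameter regulator-map continuity
theorem, with constants depending only on `T` and a sup-norm bound on `x₂(s₂,·)`. -/
theorem stmt_10 (μ θ lam w : ℝ) (hμ : 0 < μ) (hθ : 0 < θ) (hlam : 0 < lam)
    (hw : 0 < w) (a : ℝ) :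
    ∀ T > (0:ℝ), ∀ K > (0:ℝ), ∃ c₁ > (0:ℝ), ∃ c₂ > (0:ℝ), ∃ c₃ > (0:ℝ),
      ∀ s₁ ≥ (0:ℝ), ∀ s₂ ≥ (0:ℝ), ∀ x₁ x₂ : ℝ × ℝ → ℝ,
        Measurable x₁ → Measurable x₂ →
        (∃ M, ∀ p : ℝ × ℝ, |x₁ p| ≤ M ∧ |x₂ p| ≤ M) →
        (∀ u ∈ Icc (0:ℝ) T, |x₂ (s₂, u)| ≤ K) →
        ∀ lt lt' : ℝ → ℝ,
          (∀ r, HasDerivAt lt (lt' r) r) → Continuous lt' → (∀ r, 0 < lt' r) →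
          lt 0 = 0 → lt T = T →
          ∀ B ≥ (0:ℝ), (∀ r ∈ Icc (0:ℝ) T, |lt r - r| ≤ B) →
          ∀ t ∈ Icc (0:ℝ) T,
            (∫ u in (0:ℝ)..t,
              |(-(if s₁ + w ≤ u then μ * x₁ (s₁, u) else 0)
                  - (if u < s₁ + w then θ * (x₁ (s₁, u) - a) else 0))
                - (-(if s₂ + w ≤ lt u then μ * x₂ (s₂, lt u) else 0)
                  - (if lt u < s₂ + w then θ * (x₂ (s₂, lt u) - a) else 0))|) ≤
              c₁ * |s₁ - s₂| + c₂ * B +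
                c₃ * ∫ u in (0:ℝ)..t, |x₁ (s₁, u) - x₂ (s₂, lt u)| := by
  intro T hT K hK
  set C : ℝ := (μ + θ) * (K + |a|) with hCdef
  have hC : 0 < C := by
    have h1 : 0 < K + |a| := by nlinarith [abs_nonneg a]
    positivity
  refine ⟨2 * C, by linarith, 2 * C, by linarith, μ + θ, by linarith, ?_⟩
  intro s₁ hs₁ s₂ hs₂ x₁ x₂ hm₁ hm₂ hMex hK₂ lt lt' hder hcont' hpos h0 hT' B hB hlt t ht
  obtain ⟨M, hM⟩ := hMex
  have hM0 : 0 ≤ M := (abs_nonneg _).trans (hM (0, 0)).1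
  have hltc : Continuous lt := by
    exact continuous_iff_continuousAt.mpr fun x => (hder x).continuousAt
  have hmono : StrictMono lt := strictMono_of_hasDerivAt_pos hder hpos
  have hrange : ∀ u ∈ Icc (0:ℝ) t, lt u ∈ Icc (0:ℝ) T := by
    intro u hu
    constructor
    · rw [← h0]; exact hmono.monotone hu.1
    · rw [← hT']; exact hmono.monotone (hu.2.trans ht.2)
  -- abbreviations
  set b : ℝ → ℝ := fun u => x₁ (s₁, u) with hbdef
  set y : ℝ → ℝ := fun u => x₂ (s₂, lt u) with hydef
  have mb : Measurable b := hm₁.comp (measurable_const.prodMk measurable_id)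
  have my : Measurable y := hm₂.comp (measurable_const.prodMk hltc.measurable)
  set F : ℝ → ℝ := fun u =>
    |(-(if s₁ + w ≤ u then μ * b u else 0) - (if u < s₁ + w then θ * (b u - a) else 0))
      - (-(if s₂ + w ≤ lt u then μ * y u else 0)
        - (if lt u < s₂ + w then θ * (y u - a) else 0))| with hFdef
  set χ₁ : ℝ → ℝ := fun u => (Ico (s₁ + w) (s₂ + w + B)).indicator (fun _ => C) u with hχ₁def
  set χ₂ : ℝ → ℝ := fun u => (Ico (s₂ + w - B) (s₁ + w)).indicator (fun _ => C) u with hχ₂def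
  set G : ℝ → ℝ := fun u => (μ + θ) * |b u - y u| + χ₁ u + χ₂ u with hGdef
  -- measurability of F
  have mF : Measurable F := by
    apply Measurable.abs
    apply Measurable.sub
    · exact ((Measurable.ite (measurableSet_le measurable_const measurable_id)
        (mb.const_mul μ) measurable_const).neg).sub
        (Measurable.ite (measurableSet_lt measurable_id measurable_const)
          ((mb.sub measurable_const).const_mul θ) measurable_const)
    · exact ((Measurable.ite (measurableSet_le measurable_const hltc.measurable)
        (my.const_mul μ) measurable_const).neg).sub
        (Measurable.ite (measurableSet_lt hltc.measurable measurable_const)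
          ((my.sub measurable_const).const_mul θ) measurable_const)
  -- boundedness of F
  have hFbd : ∀ u, |F u| ≤ (μ * M + θ * (M + |a|)) + (μ * M + θ * (M + |a|)) := by
    intro u
    rw [hFdef]
    simp only [abs_abs]
    refine le_trans (abs_sub _ _) (add_le_add ?_ ?_)
    · exact stmt10_piece_bdd μ θ a w M s₁ u (b u) hμ hθ (hM (s₁, u)).1
    · exact stmt10_piece_bdd μ θ a w M s₂ (lt u) (y u) hμ hθ (hM (s₂, lt u)).2
  -- integrability
  have hFi : IntervalIntegrable F volume 0 t := stmt10_bdd_ii mF _ hFbd t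
  have hGa : IntervalIntegrable (fun u => (μ + θ) * |b u - y u|) volume 0 t := by
    refine stmt10_bdd_ii (((mb.sub my).abs).const_mul _) ((μ + θ) * (M + M)) (fun u => ?_) t
    rw [abs_mul, abs_abs, abs_of_pos (by linarith : (0:ℝ) < μ + θ)]
    have h1 : |b u - y u| ≤ M + M :=
      (abs_sub _ _).trans (add_le_add (hM (s₁, u)).1 (hM (s₂, lt u)).2)
    rw [Pi.sub_apply]
    nlinarith
  have hind_bd : ∀ (p q : ℝ) (u : ℝ), |(Ico p q).indicator (fun _ => C) u| ≤ C := by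
    intro p q u
    by_cases h : u ∈ Ico p q
    · simp [h, abs_of_pos hC]
    · simp [h, hC.le]
  have hχ₁i : IntervalIntegrable χ₁ volume 0 t :=
    stmt10_bdd_ii (measurable_const.indicator measurableSet_Ico) C (hind_bd _ _) t
  have hχ₂i : IntervalIntegrable χ₂ volume 0 t :=
    stmt10_bdd_ii (measurable_const.indicator measurableSet_Ico) C (hind_bd _ _) t
  have hGi : IntervalIntegrable G volume 0 t := (hGa.add hχ₁i).add hχ₂i
  -- pointwise bound
  have hpt : ∀ u ∈ Icc (0:ℝ) t, F u ≤ G u := by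
    intro u hu
    have hy : |y u| ≤ K := hK₂ _ (hrange u hu)
    have hBu : |lt u - u| ≤ B := hlt u ⟨hu.1, hu.2.trans ht.2⟩
    obtain ⟨hBu1, hBu2⟩ := abs_le.mp hBu
    have hχ₁nn : 0 ≤ χ₁ u := Set.indicator_apply_nonneg (fun _ => hC.le)
    have hχ₂nn : 0 ≤ χ₂ u := Set.indicator_apply_nonneg (fun _ => hC.le)
    have hyb : |y u - b u| = |b u - y u| := abs_sub_comm _ _
    have habsnn : 0 ≤ |b u - y u| := abs_nonneg _
    have hCkey : ∀ z : ℝ, |z| ≤ K → |θ * (z - a) - μ * z| ≤ C := by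
      intro z hz
      have h6 : |θ * (z - a) - μ * z| ≤ |θ * (z - a)| + |μ * z| := abs_sub _ _
      rw [abs_mul, abs_mul, abs_of_pos hθ, abs_of_pos hμ] at h6
      have h7 : |z - a| ≤ K + |a| := (abs_sub z a).trans (by linarith)
      nlinarith [abs_nonneg a, abs_nonneg z]
    simp only [hFdef, hGdef]
    by_cases h1 : s₁ + w ≤ u <;> by_cases h2 : s₂ + w ≤ lt u
    · rw [if_pos h1, if_neg (not_lt.2 h1), if_pos h2, if_neg (not_lt.2 h2)]
      have e : (-(μ * b u) - 0) - (-(μ * y u) - 0) = μ * (y u - b u) := by ring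
      rw [e, abs_mul, abs_of_pos hμ, hyb]
      nlinarith [mul_nonneg hθ.le habsnn]
    · -- χ₁ active
      have hmem : u ∈ Ico (s₁ + w) (s₂ + w + B) := by
        constructor
        · exact h1
        · have := not_le.mp h2; linarith
      have hχ₁eq : χ₁ u = C := by rw [hχ₁def]; exact Set.indicator_of_mem hmem _
      rw [if_pos h1, if_neg (not_lt.2 h1), if_neg h2, if_pos (not_le.mp h2)]
      have e : (-(μ * b u) - 0) - (-0 - θ * (y u - a)) =
          μ * (y u - b u) + (θ * (y u - a) - μ * y u) := by ring
      rw [e]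
      refine le_trans (abs_add_le _ _) ?_
      rw [abs_mul, abs_of_pos hμ, hyb, hχ₁eq]
      have := hCkey (y u) hy
      nlinarith [mul_nonneg hθ.le habsnn]
    · -- χ₂ active
      have hmem : u ∈ Ico (s₂ + w - B) (s₁ + w) := by
        constructor
        · linarith
        · exact not_le.mp h1
      have hχ₂eq : χ₂ u = C := by rw [hχ₂def]; exact Set.indicator_of_mem hmem _
      rw [if_neg h1, if_pos (not_le.mp h1), if_pos h2, if_neg (not_lt.2 h2)]
      have e : (-0 - θ * (b u - a)) - (-(μ * y u) - 0) =
          θ * (y u - b u) + (μ * y u - θ * (y u - a)) := by ring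
      rw [e]
      refine le_trans (abs_add_le _ _) ?_
      rw [abs_mul, abs_of_pos hθ, hyb, hχ₂eq]
      have h8 := hCkey (y u) hy
      rw [abs_sub_comm] at h8
      nlinarith [mul_nonneg hμ.le habsnn]
    · rw [if_neg h1, if_pos (not_le.mp h1), if_neg h2, if_pos (not_le.mp h2)]
      have e : (-0 - θ * (b u - a)) - (-0 - θ * (y u - a)) = θ * (y u - b u) := by ring
      rw [e, abs_mul, abs_of_pos hθ, hyb]
      nlinarith [mul_nonneg hμ.le habsnn]
  -- assemble
  have hmain : ∫ u in (0:ℝ)..t, F u ≤ ∫ u in (0:ℝ)..t, G u :=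
    intervalIntegral.integral_mono_on ht.1 hFi hGi hpt
  have hsplit : ∫ u in (0:ℝ)..t, G u =
      (∫ u in (0:ℝ)..t, (μ + θ) * |b u - y u|) + (∫ u in (0:ℝ)..t, χ₁ u)
        + ∫ u in (0:ℝ)..t, χ₂ u := by
    rw [hGdef]
    rw [intervalIntegral.integral_add (hGa.add hχ₁i) hχ₂i,
      intervalIntegral.integral_add hGa hχ₁i]
  have hmul : ∫ u in (0:ℝ)..t, (μ + θ) * |b u - y u| =
      (μ + θ) * ∫ u in (0:ℝ)..t, |b u - y u| := intervalIntegral.integral_const_mul _ _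
  have hD : 0 ≤ |s₁ - s₂| + B := by positivity
  have habs1 : s₂ - s₁ ≤ |s₁ - s₂| := by
    rw [abs_sub_comm]; exact le_abs_self _
  have habs2 : s₁ - s₂ ≤ |s₁ - s₂| := le_abs_self _
  have hχ₁int : ∫ u in (0:ℝ)..t, χ₁ u ≤ C * (|s₁ - s₂| + B) :=
    stmt10_ind_int_le hD (by linarith) C hC.le ht.1
  have hχ₂int : ∫ u in (0:ℝ)..t, χ₂ u ≤ C * (|s₁ - s₂| + B) :=
    stmt10_ind_int_le hD (by linarith) C hC.le ht.1
  calc ∫ u in (0:ℝ)..t, F u ≤ ∫ u in (0:ℝ)..t, G u := hmain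
    _ ≤ (μ + θ) * (∫ u in (0:ℝ)..t, |b u - y u|) + 2 * C * |s₁ - s₂| + 2 * C * B := by
        rw [hsplit, hmul]; nlinarith [hχ₁int, hχ₂int]
    _ = 2 * C * |s₁ - s₂| + 2 * C * B + (μ + θ) * ∫ u in (0:ℝ)..t, |b u - y u| := by ring
end

section
/- Let λ > μ > 0 and θ > 0, set q = (λ-μ)/θ and w = (1/θ) ln(λ/μ). For each τ ≥ 0 define X̄^τ(t) = (λ e^{-θ(t-τ)⁺} - μ)/θ + 1 for t < τ + w and X̄^τ(t) = e^{-μ(t-(τ+w))} for t ≥ τ + w. Then X̄^τ is the unique continuous solution of the integral equation X̄^τ(t) = (q+1) + λ(τ ∧ t) - μ((τ+w) ∧ t) - ∫₀ᵗ [1_{s ≥ τ+w} μ X̄^τ(s) + 1_{s < τ+w} θ (X̄^τ(s) - 1)] ds. -/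
open Set MeasureTheory

private lemma my_ae_ne (b : ℝ) : ∀ᵐ x : ℝ, x ≠ b := by
  have h : (volume : Measure ℝ) {b} = 0 := measure_singleton b
  rw [ae_iff]
  simpa [Set.setOf_eq_eq_singleton'] using h

private lemma my_congr_Ioo {f g : ℝ → ℝ} {a b : ℝ} (hab : a ≤ b)
    (h : ∀ x ∈ Ioo a b, f x = g x) :
    ∫ x in a..b, f x = ∫ x in a..b, g x := by
  apply intervalIntegral.integral_congr_ae
  filter_upwards [my_ae_ne b] with x hx hmem
  rw [Set.uIoc_of_le hab] at hmem
  exact h x ⟨hmem.1, lt_of_le_of_ne hmem.2 hx⟩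

private lemma my_ii_congr {f g : ℝ → ℝ} {a b : ℝ} (hab : a ≤ b)
    (h : ∀ x ∈ Ioo a b, f x = g x)
    (hg : IntervalIntegrable g volume a b) : IntervalIntegrable f volume a b := by
  rw [intervalIntegrable_iff_integrableOn_Ioc_of_le hab] at hg ⊢
  apply hg.congr
  filter_upwards [ae_restrict_mem measurableSet_Ioc, ae_restrict_of_ae (my_ae_ne b)]
    with x hx hne
  exact (h x ⟨hx.1, lt_of_le_of_ne hx.2 hne⟩).symm

/-- The explicit ED fluid path `X̄^τ` is the unique continuous solution of the
fluid integral equation with the arrival process stopped at time `τ`. -/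
theorem stmt_11 (lam μ θ : ℝ) (hμ : 0 < μ) (hlam : μ < lam) (hθ : 0 < θ)
    (τ : ℝ) (hτ : 0 ≤ τ) :
    let q : ℝ := (lam - μ) / θ
    let w : ℝ := (1 / θ) * Real.log (lam / μ)
    let X : ℝ → ℝ := fun t =>
      if t < τ + w then (lam * Real.exp (-θ * max (t - τ) 0) - μ) / θ + 1
      else Real.exp (-μ * (t - (τ + w)))
    (ContinuousOn X (Ici (0:ℝ)) ∧
      ∀ t ≥ (0:ℝ),
        X t = (q + 1) + lam * min τ t - μ * min (τ + w) t -
          ∫ s in (0:ℝ)..t,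
            ((if τ + w ≤ s then μ * X s else 0) +
              (if s < τ + w then θ * (X s - 1) else 0))) ∧
    ∀ Y : ℝ → ℝ, ContinuousOn Y (Ici (0:ℝ)) →
      (∀ t ≥ (0:ℝ),
        Y t = (q + 1) + lam * min τ t - μ * min (τ + w) t -
          ∫ s in (0:ℝ)..t,
            ((if τ + w ≤ s then μ * Y s else 0) +
              (if s < τ + w then θ * (Y s - 1) else 0))) →
      ∀ t ≥ (0:ℝ), Y t = X t := by
  intro q w X
  have hq : q = (lam - μ) / θ := rfl
  have hlam0 : 0 < lam := hμ.trans hlam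
  have hw : 0 < w := by
    have : 1 < lam / μ := (one_lt_div hμ).2 hlam
    have := Real.log_pos this
    positivity
  have hθw : θ * w = Real.log (lam / μ) := by
    show θ * (1 / θ * Real.log (lam / μ)) = Real.log (lam / μ)
    rw [← mul_assoc, mul_one_div_cancel hθ.ne', one_mul]
  have hexp : Real.exp (-(θ * w)) = μ / lam := by
    rw [hθw, Real.exp_neg, Real.exp_log (by positivity)]
    rw [inv_div]
  -- values of X
  have hX1 : ∀ s : ℝ, s ≤ τ → X s = q + 1 := by
    intro s hs
    have h1 : s < τ + w := lt_of_le_of_lt hs (by linarith)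
    have h2 : max (s - τ) 0 = 0 := max_eq_right (by linarith)
    simp only [X, if_pos h1, h2, mul_zero, Real.exp_zero, mul_one, q]
  have hX2 : ∀ s : ℝ, τ ≤ s → s < τ + w →
      X s = (lam * Real.exp (-θ * (s - τ)) - μ) / θ + 1 := by
    intro s h1 h2
    have h3 : max (s - τ) 0 = s - τ := max_eq_left (by linarith)
    simp only [X, if_pos h2, h3]
  have hX3 : ∀ s : ℝ, τ + w ≤ s → X s = Real.exp (-μ * (s - (τ + w))) := by
    intro s hs
    rcases eq_or_lt_of_le hs with h | h
    · simp only [X, if_neg (not_lt.2 hs)]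
    · simp only [X, if_neg (not_lt.2 hs)]
  -- continuity of X
  have hXc : Continuous X := by
    have hfe : X = fun t => if τ + w ≤ t then Real.exp (-μ * (t - (τ + w)))
        else (lam * Real.exp (-θ * max (t - τ) 0) - μ) / θ + 1 := by
      funext t
      by_cases h : t < τ + w
      · rw [if_neg (not_le.2 h)]; simp only [X, if_pos h]
      · rw [if_pos (not_lt.1 h)]; simp only [X, if_neg h]
    rw [hfe]
    apply Continuous.if_le
    · fun_prop
    · fun_prop
    · exact continuous_const
    · exact continuous_id
    · intro x hx
      have hx' : x = τ + w := hx.symm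
      subst hx'
      have h3 : max (τ + w - τ) 0 = w := by
        rw [max_eq_left (by linarith)]; ring
      rw [h3]
      have : -θ * w = -(θ * w) := by ring
      rw [this, hexp]
      field_simp
      simp
  -- the integrand for X
  set φ : ℝ → ℝ := fun s => (if τ + w ≤ s then μ * X s else 0) +
      (if s < τ + w then θ * (X s - 1) else 0) with hφ
  have hφ1 : ∀ s : ℝ, s < τ + w → φ s = θ * (X s - 1) := by
    intro s hs
    simp only [φ, if_neg (not_le.2 hs), if_pos hs, zero_add]
  have hφ3 : ∀ s : ℝ, τ + w ≤ s → φ s = μ * X s := by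
    intro s hs
    simp only [φ, if_pos hs, if_neg (not_lt.2 hs), add_zero]
  -- piece 1 : [0, b] with b ≤ τ
  have J1 : ∀ b : ℝ, 0 ≤ b → b ≤ τ → ∫ s in (0:ℝ)..b, φ s = (lam - μ) * b := by
    intro b hb0 hbτ
    rw [my_congr_Ioo hb0 (g := fun _ => lam - μ) (fun x hx => by
      rw [hφ1 x (by rcases hx with ⟨_, hxb⟩; linarith),
        hX1 x (le_of_lt (lt_of_lt_of_le hx.2 hbτ))]
      rw [hq, add_sub_cancel_right, mul_div_cancel₀ _ hθ.ne'])]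
    simp
    ring
  have iiφ1 : ∀ b : ℝ, 0 ≤ b → b ≤ τ → IntervalIntegrable φ volume 0 b := by
    intro b hb0 hbτ
    exact my_ii_congr hb0 (g := fun _ => lam - μ) (fun x hx => by
      rw [hφ1 x (by rcases hx with ⟨_, hxb⟩; linarith),
        hX1 x (le_of_lt (lt_of_lt_of_le hx.2 hbτ))]
      rw [hq, add_sub_cancel_right, mul_div_cancel₀ _ hθ.ne']) intervalIntegrable_const
  -- piece 2 : [τ, c] with c ≤ τ + w
  have hF2 : ∀ s : ℝ, HasDerivAt (fun s => -(lam / θ) * Real.exp (-θ * (s - τ)) - μ * s)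
      (lam * Real.exp (-θ * (s - τ)) - μ) s := by
    intro s
    have h1 : HasDerivAt (fun s : ℝ => -θ * (s - τ)) (-θ) s := by
      simpa using (((hasDerivAt_id s).sub_const τ).const_mul (-θ))
    have h2 := ((h1.exp).const_mul (-(lam / θ))).sub ((hasDerivAt_id s).const_mul μ)
    convert h2 using 1
    · rfl
    · rfl
    · rfl
    field_simp
  have J2 : ∀ c : ℝ, τ ≤ c → c ≤ τ + w →
      ∫ s in τ..c, φ s = (lam / θ) * (1 - Real.exp (-θ * (c - τ))) - μ * (c - τ) := by
    intro c h1 h2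
    rw [my_congr_Ioo h1 (g := fun s => lam * Real.exp (-θ * (s - τ)) - μ) (fun x hx => by
      rw [hφ1 x (lt_of_lt_of_le hx.2 h2), hX2 x (le_of_lt hx.1) (lt_of_lt_of_le hx.2 h2)]
      field_simp; ring)]
    rw [intervalIntegral.integral_eq_sub_of_hasDerivAt (fun x _ => hF2 x)
      (Continuous.intervalIntegrable (by fun_prop) _ _)]
    simp only [sub_self, mul_zero, Real.exp_zero, mul_one]
    ring
  have iiφ2 : ∀ c : ℝ, τ ≤ c → c ≤ τ + w → IntervalIntegrable φ volume τ c := by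
    intro c h1 h2
    exact my_ii_congr h1 (g := fun s => lam * Real.exp (-θ * (s - τ)) - μ) (fun x hx => by
      rw [hφ1 x (lt_of_lt_of_le hx.2 h2), hX2 x (le_of_lt hx.1) (lt_of_lt_of_le hx.2 h2)]
      field_simp; ring) (Continuous.intervalIntegrable (by fun_prop) _ _)
  -- piece 3 : [τ + w, t]
  have hF3 : ∀ s : ℝ, HasDerivAt (fun s => -Real.exp (-μ * (s - (τ + w))))
      (μ * Real.exp (-μ * (s - (τ + w)))) s := by
    intro s
    have h1 : HasDerivAt (fun s : ℝ => -μ * (s - (τ + w))) (-μ) s := by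
      simpa using (((hasDerivAt_id s).sub_const (τ + w)).const_mul (-μ))
    have h2 := (h1.exp).neg
    convert h2 using 1
    · rfl
    · rfl
    · rfl
    ring
  have J3 : ∀ t : ℝ, τ + w ≤ t →
      ∫ s in (τ + w)..t, φ s = 1 - Real.exp (-μ * (t - (τ + w))) := by
    intro t ht
    rw [my_congr_Ioo ht (g := fun s => μ * Real.exp (-μ * (s - (τ + w)))) (fun x hx => by
      rw [hφ3 x (le_of_lt hx.1), hX3 x (le_of_lt hx.1)])]
    rw [intervalIntegral.integral_eq_sub_of_hasDerivAt (fun x _ => hF3 x)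
      (Continuous.intervalIntegrable (by fun_prop) _ _)]
    simp only [sub_self, mul_zero, Real.exp_zero]
    ring
  have iiφ3 : ∀ t : ℝ, τ + w ≤ t → IntervalIntegrable φ volume (τ + w) t := by
    intro t ht
    exact my_ii_congr ht (g := fun s => μ * Real.exp (-μ * (s - (τ + w)))) (fun x hx => by
      rw [hφ3 x (le_of_lt hx.1), hX3 x (le_of_lt hx.1)])
      (Continuous.intervalIntegrable (by fun_prop) _ _)
  -- existence
  have hXeq : ∀ t ≥ (0:ℝ), X t = (q + 1) + lam * min τ t - μ * min (τ + w) t -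
      ∫ s in (0:ℝ)..t, φ s := by
    intro t ht
    rcases le_or_gt t τ with h1 | h1
    · rw [J1 t ht h1, hX1 t h1, min_eq_right h1, min_eq_right (by linarith)]
      ring
    · rcases lt_or_ge t (τ + w) with h2 | h2
      · rw [← intervalIntegral.integral_add_adjacent_intervals (iiφ1 τ hτ le_rfl)
          (iiφ2 t (le_of_lt h1) (le_of_lt h2))]
        rw [J1 τ hτ le_rfl, J2 t (le_of_lt h1) (le_of_lt h2),
          hX2 t (le_of_lt h1) h2, min_eq_left (le_of_lt h1),
          min_eq_right (le_of_lt h2)]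
        rw [hq]
        field_simp
        ring
      · rw [← intervalIntegral.integral_add_adjacent_intervals
          ((iiφ1 τ hτ le_rfl).trans (iiφ2 (τ + w) (by linarith) le_rfl)) (iiφ3 t h2)]
        rw [← intervalIntegral.integral_add_adjacent_intervals (iiφ1 τ hτ le_rfl)
          (iiφ2 (τ + w) (by linarith) le_rfl)]
        rw [J1 τ hτ le_rfl, J2 (τ + w) (by linarith) le_rfl, J3 t h2,
          hX3 t h2, min_eq_left (by linarith), min_eq_left h2]
        have he : -θ * (τ + w - τ) = -(θ * w) := by ring
        rw [he, hexp]
        rw [hq]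
        field_simp
        ring
  refine ⟨⟨hXc.continuousOn, hXeq⟩, ?_⟩
  -- uniqueness
  intro Y hYc hYeq
  -- integrability of the integrand for any continuous-on-Ici-0 function
  have key_ii : ∀ Z : ℝ → ℝ, ContinuousOn Z (Ici (0:ℝ)) → ∀ b : ℝ, 0 ≤ b →
      IntervalIntegrable (fun s => (if τ + w ≤ s then μ * Z s else 0) +
        (if s < τ + w then θ * (Z s - 1) else 0)) volume 0 b := by
    intro Z hZ b hb
    set c : ℝ := min (τ + w) b with hc
    have hc0 : 0 ≤ c := le_min (by linarith) hb
    have hcb : c ≤ b := min_le_right _ _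
    have hcw : c ≤ τ + w := min_le_left _ _
    have h1 : IntervalIntegrable (fun s => (if τ + w ≤ s then μ * Z s else 0) +
        (if s < τ + w then θ * (Z s - 1) else 0)) volume 0 c := by
      apply my_ii_congr hc0 (g := fun s => θ * (Z s - 1))
      · intro x hx
        have hxw : x < τ + w := lt_of_lt_of_le hx.2 hcw
        simp [if_neg (not_le.2 hxw), if_pos hxw]
      · apply ContinuousOn.intervalIntegrable
        apply ContinuousOn.mul continuousOn_const
        apply ContinuousOn.sub _ continuousOn_const
        apply hZ.mono
        rw [Set.uIcc_of_le hc0]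
        exact fun x hx => hx.1
    have h2 : IntervalIntegrable (fun s => (if τ + w ≤ s then μ * Z s else 0) +
        (if s < τ + w then θ * (Z s - 1) else 0)) volume c b := by
      rcases le_or_gt b (τ + w) with hbw | hbw
      · have : c = b := min_eq_right hbw
        rw [this]
      · have hcw' : c = τ + w := min_eq_left (le_of_lt hbw)
        apply my_ii_congr hcb (g := fun s => μ * Z s)
        · intro x hx
          have hxw : τ + w ≤ x := by rw [← hcw']; exact le_of_lt hx.1
          simp [if_pos hxw, if_neg (not_lt.2 hxw)]
        · apply ContinuousOn.intervalIntegrable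
          apply ContinuousOn.mul continuousOn_const
          apply hZ.mono
          rw [Set.uIcc_of_le hcb]
          exact fun x hx => hc0.trans hx.1
    exact h1.trans h2
  have hXii : ∀ b : ℝ, 0 ≤ b → IntervalIntegrable φ volume 0 b :=
    fun b hb => key_ii X hXc.continuousOn b hb
  have hYii : ∀ b : ℝ, 0 ≤ b → IntervalIntegrable (fun s =>
      (if τ + w ≤ s then μ * Y s else 0) + (if s < τ + w then θ * (Y s - 1) else 0))
      volume 0 b := fun b hb => key_ii Y hYc b hb
  -- the difference function, extended continuously to all of ℝ
  set E : ℝ → ℝ := fun s => Y (max s 0) - X (max s 0) with hE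
  have hEc : Continuous E := by
    have hmax : Continuous fun s : ℝ => max s 0 := continuous_id.max continuous_const
    have h1 : Continuous fun s : ℝ => Y (max s 0) :=
      hYc.comp_continuous hmax (fun x => mem_Ici.2 (le_max_right _ _))
    exact h1.sub (hXc.comp hmax)
  have hE0 : ∀ s : ℝ, 0 ≤ s → E s = Y s - X s := by
    intro s hs
    simp [E, max_eq_left hs]
  set L : ℝ := max μ θ with hL
  have hL0 : 0 ≤ L := le_max_of_le_left (le_of_lt hμ)
  -- key Gronwall-type inequality
  have hkey : ∀ x : ℝ, 0 ≤ x → |E x| ≤ L * ∫ s in (0:ℝ)..x, |E s| := by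
    intro x hx
    have hEx : E x = -∫ s in (0:ℝ)..x, (((if τ + w ≤ s then μ * Y s else 0) +
        (if s < τ + w then θ * (Y s - 1) else 0)) - φ s) := by
      rw [intervalIntegral.integral_sub (hYii x hx) (hXii x hx)]
      rw [hE0 x hx, hYeq x hx, hXeq x hx]
      ring
    rw [hEx, abs_neg]
    calc |∫ s in (0:ℝ)..x, (((if τ + w ≤ s then μ * Y s else 0) +
          (if s < τ + w then θ * (Y s - 1) else 0)) - φ s)|
        ≤ ∫ s in (0:ℝ)..x, |((if τ + w ≤ s then μ * Y s else 0) +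
          (if s < τ + w then θ * (Y s - 1) else 0)) - φ s| :=
          intervalIntegral.abs_integral_le_integral_abs hx
      _ ≤ ∫ s in (0:ℝ)..x, L * |E s| := by
          apply intervalIntegral.integral_mono_on hx
          · exact ((hYii x hx).sub (hXii x hx)).abs
          · exact Continuous.intervalIntegrable (by fun_prop) _ _
          · intro s hs
            rw [hE0 s hs.1]
            rcases le_or_gt (τ + w) s with hsw | hsw
            · rw [hφ3 s hsw]
              simp only [if_pos hsw, if_neg (not_lt.2 hsw), add_zero]
              have : μ * Y s - μ * X s = μ * (Y s - X s) := by ring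
              rw [this, abs_mul, abs_of_pos hμ]
              exact mul_le_mul_of_nonneg_right (le_max_left _ _) (abs_nonneg _)
            · rw [hφ1 s hsw]
              simp only [if_neg (not_le.2 hsw), if_pos hsw, zero_add]
              have : θ * (Y s - 1) - θ * (X s - 1) = θ * (Y s - X s) := by ring
              rw [this, abs_mul, abs_of_pos hθ]
              exact mul_le_mul_of_nonneg_right (le_max_right _ _) (abs_nonneg _)
      _ = L * ∫ s in (0:ℝ)..x, |E s| := intervalIntegral.integral_const_mul _ _
  -- Gronwall
  intro t ht
  set ψ : ℝ → ℝ := fun x => ∫ s in (0:ℝ)..x, |E s| with hψ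
  have hEabs : Continuous fun s => |E s| := hEc.abs
  have hψd : ∀ x : ℝ, HasDerivAt ψ (|E x|) x := by
    intro x
    exact intervalIntegral.integral_hasDerivAt_right
      (hEabs.intervalIntegrable _ _)
      (hEabs.stronglyMeasurable.stronglyMeasurableAtFilter)
      hEabs.continuousAt
  have hψ0 : ψ 0 = 0 := intervalIntegral.integral_same
  have hψnn : ∀ x : ℝ, 0 ≤ x → 0 ≤ ψ x := by
    intro x hx
    exact intervalIntegral.integral_nonneg hx (fun s _ => abs_nonneg _)
  have hgron : ∀ x ∈ Icc (0:ℝ) t, ‖ψ x‖ ≤ gronwallBound 0 L 0 (x - 0) := by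
    apply norm_le_gronwallBound_of_norm_deriv_right_le
      (f := ψ) (f' := fun x => |E x|)
    · exact fun x _ => ((hψd x).continuousAt).continuousWithinAt
    · exact fun x _ => (hψd x).hasDerivWithinAt
    · simp [hψ0]
    · intro x hx
      rw [Real.norm_eq_abs, Real.norm_eq_abs, abs_abs,
        abs_of_nonneg (hψnn x hx.1)]
      have := hkey x hx.1
      linarith
  have hψt : ψ t = 0 := by
    have := hgron t ⟨ht, le_refl t⟩
    rw [gronwallBound_ε0_δ0] at this
    have h2 := hψnn t ht
    rw [Real.norm_eq_abs, abs_of_nonneg h2] at this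
    linarith
  have hEt : E t = 0 := by
    have := hkey t ht
    rw [show (∫ s in (0:ℝ)..t, |E s|) = ψ t from rfl, hψt, mul_zero] at this
    exact abs_eq_zero.1 (le_antisymm this (abs_nonneg _))
  have := hE0 t ht
  rw [hEt] at this
  linarith [this.symm]
end

section
/- With λ > μ > 0, θ > 0, w = (1/θ)ln(λ/μ), and X̄^τ as defined from the ED fluid equation, the fluid limit of departures D̄^τ(t) = μ(t ∧ (τ+w)) + 1 - e^{-μ(t-(τ+w))⁺} and abandonments L̄^τ(t) = (λ-μ)(t ∧ τ) + (λ/θ)(1 - e^{-θ[t-τ]₀^w}) - μ[t-τ]₀^w satisfy the conservation identity X̄^τ(t) = X̄^τ(0) + λ(t ∧ τ) - D̄^τ(t) - L̄^τ(t) for all t ≥ 0, where X̄^τ(0) = (λ-μ)/θ + 1. -/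
/-- Flow conservation at the fluid level in the ED regime:
`X̄^τ(t) = X̄^τ(0) + λ(t ∧ τ) − D̄^τ(t) − L̄^τ(t)`. -/
theorem stmt_12 (lam μ θ : ℝ) (hμ : 0 < μ) (hlam : μ < lam) (hθ : 0 < θ)
    (τ : ℝ) (hτ : 0 ≤ τ) :
    let w : ℝ := (1 / θ) * Real.log (lam / μ)
    let X : ℝ → ℝ := fun t =>
      if t < τ + w then (lam * Real.exp (-θ * max (t - τ) 0) - μ) / θ + 1
      else Real.exp (-μ * (t - (τ + w)))
    let D : ℝ → ℝ := fun t =>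
      μ * min t (τ + w) + 1 - Real.exp (-μ * max (t - (τ + w)) 0)
    let L : ℝ → ℝ := fun t =>
      (lam - μ) * min t τ + (lam / θ) * (1 - Real.exp (-θ * max (min (t - τ) w) 0))
        - μ * max (min (t - τ) w) 0
    (X 0 = (lam - μ) / θ + 1) ∧
      ∀ t ≥ (0:ℝ), X t = X 0 + lam * min t τ - D t - L t := by
  intro w X D L
  have hlam0 : 0 < lam := hμ.trans hlam
  have hw : 0 < w := by
    have h1 : (1:ℝ) < lam / μ := (one_lt_div hμ).mpr hlam
    have := Real.log_pos h1
    positivity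
  have hew : Real.exp (-θ * w) = μ / lam := by
    have : -θ * w = Real.log (μ / lam) := by
      have : θ * ((1/θ) * Real.log (lam/μ)) = Real.log (lam/μ) := by
        field_simp
      rw [show w = (1/θ) * Real.log (lam/μ) from rfl, neg_mul, this,
        ← Real.log_inv, inv_div]
    rw [this, Real.exp_log (by positivity)]
  have hX0 : X 0 = (lam - μ) / θ + 1 := by
    have h1 : (0:ℝ) < τ + w := by linarith
    have h2 : max ((0:ℝ) - τ) 0 = 0 := max_eq_right (by linarith)
    simp only [X, if_pos h1, h2, mul_zero, Real.exp_zero, mul_one]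
  refine ⟨hX0, fun t ht => ?_⟩
  rcases lt_or_ge t τ with h1 | h1
  · -- t < τ
    have hxt : t < τ + w := by linarith
    have hm1 : min t τ = t := min_eq_left h1.le
    have hm2 : max (t - τ) 0 = 0 := max_eq_right (by linarith)
    have hm3 : min t (τ + w) = t := min_eq_left hxt.le
    have hm4 : max (t - (τ + w)) 0 = 0 := max_eq_right (by linarith)
    have hm5 : max (min (t - τ) w) 0 = 0 := by
      rw [min_eq_left (by linarith), max_eq_right (by linarith)]
    rw [hX0]
    simp only [X, D, L, if_pos hxt, hm1, hm2, hm3, hm4, hm5, mul_zero,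
      Real.exp_zero]
    ring
  rcases lt_or_ge t (τ + w) with h2 | h2
  · -- τ ≤ t < τ + w
    have hm1 : min t τ = τ := min_eq_right h1
    have hm2 : max (t - τ) 0 = t - τ := max_eq_left (by linarith)
    have hm3 : min t (τ + w) = t := min_eq_left h2.le
    have hm4 : max (t - (τ + w)) 0 = 0 := max_eq_right (by linarith)
    have hm5 : max (min (t - τ) w) 0 = t - τ := by
      rw [min_eq_left (by linarith), max_eq_left (by linarith)]
    rw [hX0]
    simp only [X, D, L, if_pos h2, hm1, hm2, hm3, hm4, hm5, mul_zero,
      Real.exp_zero]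
    field_simp
    ring
  · -- t ≥ τ + w
    have hm1 : min t τ = τ := min_eq_right (by linarith)
    have hm3 : min t (τ + w) = τ + w := min_eq_right h2
    have hm4 : max (t - (τ + w)) 0 = t - (τ + w) := max_eq_left (by linarith)
    have hm5 : max (min (t - τ) w) 0 = w := by
      rw [min_eq_right (by linarith), max_eq_left hw.le]
    rw [hX0]
    simp only [X, D, L, if_neg (not_lt.mpr h2), hm1, hm3, hm4, hm5, hew]
    field_simp
    ring
end
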